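/- Let k ≥ 1. For every box (i,j) of the double staircase partition ρ̃_{2k} with i even and j odd, one has wt((i,j),(1,2k)) = 0. -/

import Mathlib

/-- `(i,j)` is a box of the Young diagram of `lam` (parts `lam 1, lam 2, …`, rows indexed
from the top, columns from the left): `1 ≤ i`, `1 ≤ j ≤ lam i`. -/
def inDiagram (lam : ℕ → ℕ) (p : ℕ × ℕ) : Prop :=
  1 ≤ p.1 ∧ 1 ≤ p.2 ∧ p.2 ≤ lam p.1

/-- A step of a lattice path: up `(i,j) → (i-1,j)` or right `(i,j) → (i,j+1)`. -/
def isStep (p q : ℕ × ℕ) : Prop :=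
  (p.1 = q.1 + 1 ∧ p.2 = q.2) ∨ (q.1 = p.1 ∧ q.2 = p.2 + 1)

/-- `P` is a lattice path in `lam` from box `a` to box `b`: a nonempty sequence of boxes of
`lam` starting at `a`, ending at `b`, each step going up or right. -/
def IsLatticePath (lam : ℕ → ℕ) (a b : ℕ × ℕ) (P : List (ℕ × ℕ)) : Prop :=
  P ≠ [] ∧ P.head? = some a ∧ P.getLast? = some b ∧
    (∀ q ∈ P, inDiagram lam q) ∧ List.Chain' isStep P

/-- The signed weight of a path: the product of `(-1)^{i-1}` over all right steps taken from a
box in row `i` (up steps contribute `1`). -/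
def pathWeight : List (ℕ × ℕ) → ℤ
  | [] => 1
  | [_] => 1
  | p :: q :: rest =>
      (if q.1 = p.1 then (-1 : ℤ) ^ (p.1 - 1) else 1) * pathWeight (q :: rest)

/-- `wt(a,b)`: the sum of the signed weights of all lattice paths in `lam` from `a` to `b`. -/
noncomputable def wtSum (lam : ℕ → ℕ) (a b : ℕ × ℕ) : ℤ :=
  ∑ᶠ P ∈ {P : List (ℕ × ℕ) | IsLatticePath lam a b P}, pathWeight P

/-- The double staircase partition `ρ̃_n`: `(n,n,n-2,n-2,…,2,2)` for even `n` and
`(n,n,n-2,n-2,…,3,3,2)` for odd `n`, as a function sending a row index to its part. -/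
def rhoTilde (n i : ℕ) : ℕ :=
  if 1 ≤ i ∧ i ≤ n then (if n % 2 = 1 ∧ i = n then 2 else n - 2 * ((i - 1) / 2)) else 0

/-!
Removing the first box of a path gives the recurrence
`wt((i,j),b) = wt((i-1,j),b) + (-1)^(i-1) wt((i,j+1),b)`. For `i` even and `j` odd, apply it at
`(i,j)`, `(i-1,j)` and `(i,j+1)`: since rows `i-1` and `i` carry opposite signs, the two
contributions of `(i-1,j+1)` cancel and `wt((i,j),b) = wt((i-2,j),b) + wt((i,j+2),b)`. Iterating
pushes every term out of the diagram. The boxes `(i,j+1)` and `(i-1,j)` exist because each even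
row of `ρ̃_{2k}` has even length and is as long as the row above it.
-/

open Set

section LatticePaths

variable {lam : ℕ → ℕ} {a b c : ℕ × ℕ} {i j : ℕ}

def latticePaths (lam : ℕ → ℕ) (a b : ℕ × ℕ) : Set (List (ℕ × ℕ)) :=
  {P | IsLatticePath lam a b P}

theorem wtSum_eq_finsum_latticePaths :
    wtSum lam a b = ∑ᶠ P ∈ latticePaths lam a b, pathWeight P := rfl

theorem isStep.content_lt (h : isStep a c) : (a.2 : ℤ) - a.1 < (c.2 : ℤ) - c.1 := by
  rcases h with ⟨h1, h2⟩ | ⟨h1, h2⟩ <;> omega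

theorem inDiagram_mk_iff : inDiagram lam (i, j) ↔ 1 ≤ i ∧ 1 ≤ j ∧ j ≤ lam i := Iff.rfl

theorem isStep_iff (hi : 1 ≤ i) : isStep (i, j) c ↔ c = (i - 1, j) ∨ c = (i, j + 1) := by
  obtain ⟨c1, c2⟩ := c
  simp only [isStep, Prod.mk.injEq]
  omega

theorem IsLatticePath.nodup {P : List (ℕ × ℕ)} (hP : IsLatticePath lam a b P) : P.Nodup :=
  ((List.isChain_map_of_isChain _ fun _ _ h => isStep.content_lt h)
    hP.2.2.2.2).sortedLT.nodup.of_map _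

theorem IsLatticePath.eq_cons {P : List (ℕ × ℕ)} (hP : IsLatticePath lam a b P) :
    P = a :: P.tail := by
  obtain ⟨hne, hhead, -⟩ := hP
  cases P with
  | nil => exact absurd rfl hne
  | cons x P => simp_all

theorem isLatticePath_singleton_iff {x : ℕ × ℕ} :
    IsLatticePath lam a b [x] ↔ x = a ∧ x = b ∧ inDiagram lam x := by
  simp [IsLatticePath, List.Chain', eq_comm]

theorem isLatticePath_cons_cons_iff {x y : ℕ × ℕ} {R : List (ℕ × ℕ)} :
    IsLatticePath lam a b (x :: y :: R) ↔
      x = a ∧ inDiagram lam a ∧ isStep a y ∧ IsLatticePath lam y b (y :: R) := by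
  simp only [IsLatticePath, List.Chain', List.isChain_cons_cons, List.mem_cons, forall_eq_or_imp]
  aesop

theorem finite_latticePaths (hD : {p | inDiagram lam p}.Finite) (a b : ℕ × ℕ) :
    (latticePaths lam a b).Finite := by
  set D := {p | inDiagram lam p}
  have := hD.fintype
  refine ((List.finite_length_le D (Fintype.card D)).image (List.map Subtype.val)).subset ?_
  intro P hP
  lift P to List D using hP.2.2.2.1
  exact ⟨P, (hP.nodup.of_map _).length_le_card, rfl⟩

theorem latticePaths_eq_image (ha : inDiagram lam (i, j)) (hab : (i, j) ≠ b) :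
    latticePaths lam (i, j) b = ((i, j) :: ·) ''
      (latticePaths lam (i - 1, j) b ∪ latticePaths lam (i, j + 1) b) := by
  ext P
  constructor
  · intro hP
    match P, hP with
    | [], hP => exact absurd rfl hP.1
    | [x], hP =>
      obtain ⟨rfl, rfl, -⟩ := isLatticePath_singleton_iff.1 hP
      exact absurd rfl hab
    | x :: y :: R, hP =>
      obtain ⟨rfl, -, hstep, hR⟩ := isLatticePath_cons_cons_iff.1 hP
      rcases (isStep_iff ha.1).1 hstep with rfl | rfl
      exacts [⟨_, Or.inl hR, rfl⟩, ⟨_, Or.inr hR, rfl⟩]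
  · rintro ⟨Q, hQ, rfl⟩
    rcases hQ with hQ | hQ <;> have hcons := hQ.eq_cons <;> rw [hcons] at hQ ⊢ <;>
      exact isLatticePath_cons_cons_iff.2 ⟨rfl, ha, (isStep_iff ha.1).2 (by simp), hQ⟩

theorem wtSum_eq_add (hD : {p | inDiagram lam p}.Finite) (ha : inDiagram lam (i, j))
    (hab : (i, j) ≠ b) :
    wtSum lam (i, j) b = wtSum lam (i - 1, j) b + (-1) ^ (i - 1) * wtSum lam (i, j + 1) b := by
  have hdisj : Disjoint (latticePaths lam (i - 1, j) b) (latticePaths lam (i, j + 1) b) :=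
    disjoint_left.2 fun Q hup hright => by
      have := hup.2.1.symm.trans hright.2.1
      simp at this
  have hup : ∀ Q ∈ latticePaths lam (i - 1, j) b, pathWeight ((i, j) :: Q) = pathWeight Q := by
    intro Q hQ
    rw [hQ.eq_cons]
    simp only [pathWeight]
    rw [if_neg (by have := ha.1; omega), one_mul]
  have hright : ∀ Q ∈ latticePaths lam (i, j + 1) b,
      pathWeight ((i, j) :: Q) = (-1) ^ (i - 1) * pathWeight Q := by
    intro Q hQ
    rw [hQ.eq_cons]
    simp only [pathWeight, if_true]
  rw [wtSum_eq_finsum_latticePaths, latticePaths_eq_image ha hab,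
    finsum_mem_image List.cons_injective.injOn,
    finsum_mem_union hdisj (finite_latticePaths hD _ _) (finite_latticePaths hD _ _),
    finsum_mem_congr rfl hup, finsum_mem_congr rfl hright, ← mul_finsum_mem]
  rfl

theorem wtSum_eq_zero_of_not_inDiagram (ha : ¬ inDiagram lam a) : wtSum lam a b = 0 := by
  have hempty : latticePaths lam a b = ∅ := eq_empty_of_forall_notMem fun P hP =>
    ha (hP.2.2.2.1 a (hP.eq_cons ▸ List.mem_cons_self))
  rw [wtSum_eq_finsum_latticePaths, hempty, finsum_mem_empty]

end LatticePaths

section PairedRows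

variable {lam : ℕ → ℕ} {r s : ℕ}

theorem wtSum_eq_wtSum_sub_two_add_wtSum_add_two (hD : {p | inDiagram lam p}.Finite)
    (hr : r % 2 = 1) (hs : s % 2 = 0) {i j : ℕ} (hbox : inDiagram lam (i, j)) (hi : i % 2 = 0)
    (hj : j % 2 = 1) (hrow_even : lam i % 2 = 0) (hrow_le : lam i ≤ lam (i - 1)) :
    wtSum lam (i, j) (r, s) = wtSum lam (i - 2, j) (r, s) + wtSum lam (i, j + 2) (r, s) := by
  obtain ⟨hi1, hj1, hjle⟩ := inDiagram_mk_iff.1 hbox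
  have hsign : (-1 : ℤ) ^ (i - 1) = -1 := Odd.neg_one_pow (Nat.odd_iff.2 (by omega))
  have hsign' : (-1 : ℤ) ^ (i - 1 - 1) = 1 := Even.neg_one_pow (Nat.even_iff.2 (by omega))
  have hright := wtSum_eq_add hD (j := j + 1) (inDiagram_mk_iff.2 ⟨hi1, by omega, by omega⟩)
    (b := (r, s)) (by simp only [ne_eq, Prod.mk.injEq]; omega)
  have hup := wtSum_eq_add hD (i := i - 1) (inDiagram_mk_iff.2 ⟨by omega, hj1, by omega⟩)
    (b := (r, s)) (by simp only [ne_eq, Prod.mk.injEq]; omega)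
  rw [wtSum_eq_add hD hbox (by simp only [ne_eq, Prod.mk.injEq]; omega), hup, hright,
    hsign, hsign', show i - 1 - 1 = i - 2 by omega]
  ring

theorem wtSum_eq_zero_of_even_of_odd (hD : {p | inDiagram lam p}.Finite)
    (hrow_even : ∀ i, i % 2 = 0 → lam i % 2 = 0) (hrow_le : ∀ i, i % 2 = 0 → lam i ≤ lam (i - 1))
    (hr : r % 2 = 1) (hs : s % 2 = 0) {i j : ℕ}
    (hi : i % 2 = 0) (hj : j % 2 = 1) :
    wtSum lam (i, j) (r, s) = 0 := by
  by_cases hbox : inDiagram lam (i, j)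
  · rw [wtSum_eq_wtSum_sub_two_add_wtSum_add_two hD hr hs hbox hi hj (hrow_even i hi)
        (hrow_le i hi),
      wtSum_eq_zero_of_even_of_odd hD hrow_even hrow_le hr hs (i := i - 2) (by omega) hj,
      wtSum_eq_zero_of_even_of_odd hD hrow_even hrow_le hr hs (j := j + 2) hi (by omega),
      add_zero]
  · exact wtSum_eq_zero_of_not_inDiagram hbox
termination_by (i, lam i - j)
decreasing_by
  all_goals obtain ⟨hi1, -, hjle⟩ := inDiagram_mk_iff.1 hbox
  · exact Prod.Lex.left _ _ (by omega)
  · exact Prod.Lex.right _ (by have := hrow_even i hi; omega)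

end PairedRows

theorem rhoTilde_le (n i : ℕ) : rhoTilde n i ≤ n + 1 := by
  unfold rhoTilde
  split_ifs <;> omega

theorem rhoTilde_eq_zero {n i : ℕ} (h : n < i) : rhoTilde n i = 0 := by
  unfold rhoTilde
  split_ifs <;> omega

theorem finite_inDiagram_rhoTilde (n : ℕ) : {p | inDiagram (rhoTilde n) p}.Finite :=
  ((finite_Icc 1 n).prod (finite_Icc 1 (n + 1))).subset fun p ⟨hp1, hp2, hp3⟩ => by
    have hrow : p.1 ≤ n := by
      by_contra h
      rw [rhoTilde_eq_zero (not_le.1 h)] at hp3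
      omega
    exact ⟨⟨hp1, hrow⟩, hp2, hp3.trans (rhoTilde_le n p.1)⟩

theorem rhoTilde_two_mul_mod_two (k i : ℕ) : rhoTilde (2 * k) i % 2 = 0 := by
  unfold rhoTilde
  split_ifs <;> omega

theorem rhoTilde_two_mul_sub_one (k : ℕ) {i : ℕ} (hi : i % 2 = 0) :
    rhoTilde (2 * k) (i - 1) = rhoTilde (2 * k) i := by
  unfold rhoTilde
  split_ifs <;> omega

theorem stmt10_general (k : ℕ) (i j : ℕ)
    (hi : i % 2 = 0) (hj : j % 2 = 1) :
    wtSum (rhoTilde (2 * k)) (i, j) (1, 2 * k) = 0 :=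
  wtSum_eq_zero_of_even_of_odd (finite_inDiagram_rhoTilde _)
    (fun i _ => rhoTilde_two_mul_mod_two k i) (fun _ hi => (rhoTilde_two_mul_sub_one k hi).ge)
    rfl (by omega) hi hj

/-- For `k ≥ 1` and every box `(i,j)` of the double staircase partition
`ρ̃_{2k}` with `i` even and `j` odd, `wt((i,j),(1,2k)) = 0`. -/
theorem stmt10 (k : ℕ) (hk : 1 ≤ k) (i j : ℕ)
    (hbox : inDiagram (rhoTilde (2 * k)) (i, j)) (hi : i % 2 = 0) (hj : j % 2 = 1) :
    wtSum (rhoTilde (2 * k)) (i, j) (1, 2 * k) = 0 :=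
  stmt10_general k i j hi hj
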